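/- arXiv:1209.3541 — 2 statements merged into one kernel-verified Lean document; each statement's English description precedes it below -/
import Mathlib

section
/- Let X ⊆ ℝ² be such that any two distinct points of X are at distance at least 2r from each other (r > 0), and let q > 0. Let 𝒯 be a family of triangles with vertices in X, each with circumradius at most q, with pairwise disjoint interiors, and each contained in the closed disk B_α of radius α > 0 centered at the origin. Then 𝒯 has cardinality at most qπα²/(2r³). -/
/-!
A triangle with circumradius `R` and sides `a, b, c` has area `abc / (4R)`; if its vertices are
`2r`-separated and `R ≤ q`, this is at least `(2r)³ / (4q) = 2r³ / q`. The interiors of the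
triangles are disjoint, lie in the disk of area `πα²`, and have the same area as the triangles
(the boundary of a convex set is null), so there are at most `πα² / (2r³ / q)` of them.
-/

open Function MeasureTheory Set Pointwise Module InnerProductGeometry EuclideanGeometry

section Parallelogram

variable {E : Type*} [AddCommGroup E] [Module ℝ E]

lemma smul_add_smul_mem_convexHull_zero {u v : E} {a b : ℝ} (ha : 0 ≤ a) (hb : 0 ≤ b)
    (hab : a + b ≤ 1) : a • u + b • v ∈ convexHull ℝ {0, u, v} := by
  have := (convex_convexHull ℝ ({0, u, v} : Set E)).sum_mem (t := Finset.univ)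
    (w := ![1 - a - b, a, b]) (z := ![0, u, v])
    (fun i _ => by fin_cases i <;> simp <;> linarith)
    (by simp [Fin.sum_univ_three]; ring)
    (fun i _ => subset_convexHull ℝ _ (by fin_cases i <;> simp))
  simpa [Fin.sum_univ_three] using this

/-- The diagonal from `u` to `v` cuts the parallelogram into the triangle `{0, u, v}` and its
point reflection through the centre. -/
lemma parallelepiped_pair_subset (u v : E) :
    parallelepiped ![u, v] ⊆ convexHull ℝ {0, u, v} ∪ ((u + v) +ᵥ -convexHull ℝ {0, u, v}) := by
  intro x hx
  obtain ⟨t, ⟨ht0, ht1⟩, rfl⟩ := (mem_parallelepiped_iff _ _).1 hx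
  simp only [Pi.le_def, Pi.zero_apply, Pi.one_apply] at ht0 ht1
  simp only [Fin.sum_univ_two, Matrix.cons_val_zero, Matrix.cons_val_one]
  rcases le_or_gt (t 0 + t 1) 1 with h | h
  · exact .inl (smul_add_smul_mem_convexHull_zero (ht0 0) (ht0 1) h)
  · refine .inr ((mem_vadd_set_iff_neg_vadd_mem ..).2 (Set.mem_neg.2 ?_))
    convert smul_add_smul_mem_convexHull_zero (u := u) (v := v) (sub_nonneg.2 (ht1 0))
      (sub_nonneg.2 (ht1 1)) (by linarith) using 1
    simp only [vadd_eq_add, sub_smul, one_smul]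
    abel

theorem measure_parallelepiped_pair_le [MeasurableSpace E] [MeasurableNeg E] (μ : Measure E)
    [μ.IsAddLeftInvariant] [μ.IsNegInvariant] (u v : E) :
    μ (parallelepiped ![u, v]) ≤ 2 * μ (convexHull ℝ {0, u, v}) :=
  calc μ (parallelepiped ![u, v])
      ≤ μ (convexHull ℝ {0, u, v} ∪ ((u + v) +ᵥ -convexHull ℝ {0, u, v})) :=
        measure_mono (parallelepiped_pair_subset u v)
    _ ≤ μ (convexHull ℝ {0, u, v}) + μ ((u + v) +ᵥ -convexHull ℝ {0, u, v}) :=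
        measure_union_le _ _
    _ = 2 * μ (convexHull ℝ {0, u, v}) := by rw [measure_vadd, Measure.measure_neg, two_mul]

end Parallelogram

section Plane

variable {F : Type*} [NormedAddCommGroup F] [InnerProductSpace ℝ F] [Fact (finrank ℝ F = 2)]

theorem Orientation.abs_areaForm_eq_norm_mul_norm_mul_sin_angle (o : Orientation ℝ F (Fin 2))
    (x y : F) : |o.areaForm x y| = ‖x‖ * ‖y‖ * Real.sin (angle x y) := by
  have hsq := o.inner_sq_add_areaForm_sq x y
  rw [mul_comm, sin_angle_mul_norm_mul_norm, real_inner_self_eq_norm_sq,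
    real_inner_self_eq_norm_sq, ← Real.sqrt_sq_eq_abs]
  congr 1
  linarith

variable [FiniteDimensional ℝ F] [MeasurableSpace F] [BorelSpace F]

theorem volume_parallelepiped_pair (u v : F) :
    volume (parallelepiped ![u, v]) = ENNReal.ofReal (‖u‖ * ‖v‖ * Real.sin (angle u v)) := by
  let o : Orientation ℝ F (Fin 2) := (finBasisOfFinrankEq ℝ F Fact.out).orientation
  rw [← o.measure_eq_volume, AlternatingMap.measure_parallelepiped,
    ← o.areaForm_to_volumeForm, o.abs_areaForm_eq_norm_mul_norm_mul_sin_angle]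

theorem Affine.Triangle.ofReal_mul_dist_div_le_volume_convexHull (t : Affine.Triangle ℝ F) :
    ENNReal.ofReal (dist (t.points 0) (t.points 1) * dist (t.points 0) (t.points 2) *
      dist (t.points 1) (t.points 2) / (4 * t.circumradius)) ≤
      volume (convexHull ℝ (range t.points)) := by
  set p := t.points
  have hR := t.circumradius_pos
  have hrange : range p = p 0 +ᵥ ({0, p 1 - p 0, p 2 - p 0} : Set F) := by
    ext x
    simp [Fin.exists_fin_succ, eq_comm, Set.vadd_set_insert]
  have hsine : dist (p 1) (p 2) / Real.sin (∠ (p 1) (p 0) (p 2)) = 2 * t.circumradius :=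
    t.dist_div_sin_angle_eq_two_mul_circumradius (by decide) (by decide) (by decide)
  have hsin : Real.sin (∠ (p 1) (p 0) (p 2)) = dist (p 1) (p 2) / (2 * t.circumradius) := by
    have : Real.sin (∠ (p 1) (p 0) (p 2)) ≠ 0 := fun h => by simp [h] at hsine; linarith
    field_simp at hsine ⊢
    linarith
  have hpar := measure_parallelepiped_pair_le volume (p 1 - p 0) (p 2 - p 0)
  rw [volume_parallelepiped_pair, ← dist_eq_norm, ← dist_eq_norm] at hpar
  rw [hrange, convexHull_vadd, measure_vadd]
  calc _ = ENNReal.ofReal (dist (p 1) (p 0) * dist (p 2) (p 0) *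
        Real.sin (∠ (p 1) (p 0) (p 2))) / 2 := by
        rw [← ENNReal.ofReal_ofNat 2, ← ENNReal.ofReal_div_of_pos two_pos, hsin,
          dist_comm (p 1) (p 0), dist_comm (p 2) (p 0)]
        ring_nf
    _ ≤ _ := ENNReal.div_le_of_le_mul' hpar

theorem Affine.Triangle.ofReal_le_volume_convexHull_of_le_dist {r q : ℝ} (hr : 0 ≤ r)
    (t : Affine.Triangle ℝ F) (hsep : ∀ i j, i ≠ j → 2 * r ≤ dist (t.points i) (t.points j))
    (hq : t.circumradius ≤ q) :
    ENNReal.ofReal (2 * r ^ 3 / q) ≤ volume (convexHull ℝ (range t.points)) := by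
  refine le_trans (ENNReal.ofReal_le_ofReal ?_) t.ofReal_mul_dist_div_le_volume_convexHull
  have hR := t.circumradius_pos
  calc 2 * r ^ 3 / q = 2 * r * (2 * r) * (2 * r) / (4 * q) := by
        field_simp; ring
    _ ≤ _ := by gcongr <;> first | positivity | exact hsep _ _ (by decide)

end Plane

theorem MeasureTheory.enatCard_mul_le_measure_iUnion {α ι : Type*} [MeasurableSpace α]
    (μ : Measure α) {As : ι → Set α} (hmeas : ∀ i, NullMeasurableSet (As i) μ)
    (hdisj : Pairwise (Disjoint on As)) {c : ENNReal} (hc : ∀ i, c ≤ μ (As i)) :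
    ENat.card ι * c ≤ μ (⋃ i, As i) :=
  calc ENat.card ι * c = ∑' _ : ι, c := (ENNReal.tsum_const c).symm
    _ ≤ ∑' i, μ (As i) := ENNReal.tsum_le_tsum hc
    _ ≤ μ (⋃ i, As i) :=
      tsum_meas_le_meas_iUnion_of_disjoint₀ μ hmeas fun _ _ hij => (hdisj hij).aedisjoint

theorem finite_and_natCard_mul_le_of_enatCard_mul_le {ι : Type*} {c M : ℝ} (hc : 0 < c)
    (hM : 0 ≤ M) (h : ENat.card ι * ENNReal.ofReal c ≤ ENNReal.ofReal M) :
    Finite ι ∧ Nat.card ι * c ≤ M := by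
  have hfin : Finite ι := by
    refine not_infinite_iff_finite.1 fun hinf => ?_
    rw [ENat.card_eq_top.2 hinf, ENat.toENNReal_top,
      ENNReal.top_mul (ENNReal.ofReal_pos.2 hc).ne'] at h
    exact ENNReal.ofReal_ne_top (top_le_iff.1 h)
  rw [ENat.card_eq_coe_natCard, ENat.toENNReal_coe, ← ENNReal.ofReal_natCast,
    ← ENNReal.ofReal_mul (Nat.cast_nonneg _), ENNReal.ofReal_le_ofReal_iff hM] at h
  exact ⟨hfin, h⟩

/-- Let `X ⊆ ℝ²` have pairwise distances at least `2 * r` (`r > 0`) and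
let `q > 0`. A family of triangles with vertices in `X`, each with circumradius at most
`q`, with pairwise disjoint interiors, each contained in the closed disk `B_α` (`α > 0`),
has cardinality at most `q * π * α ^ 2 / (2 * r ^ 3)`. -/
theorem card_uniformlyBounded_triangles_in_disk_le
    (X : Set (EuclideanSpace ℝ (Fin 2))) (r q α : ℝ) (hr : 0 < r) (hq : 0 < q) (hα : 0 < α)
    (hsep : ∀ p ∈ X, ∀ p' ∈ X, p ≠ p' → 2 * r ≤ dist p p')
    (𝒯 : Set (Set (EuclideanSpace ℝ (Fin 2))))
    (htri : ∀ T ∈ 𝒯, ∃ p : Fin 3 → EuclideanSpace ℝ (Fin 2),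
      ∃ hp : AffineIndependent ℝ p, (∀ i, p i ∈ X) ∧ T = convexHull ℝ (Set.range p) ∧
        Affine.Simplex.circumradius (⟨p, hp⟩ : Affine.Simplex ℝ (EuclideanSpace ℝ (Fin 2)) 2) ≤ q)
    (hdisj : 𝒯.Pairwise fun S T => Disjoint (interior S) (interior T))
    (hsub : ∀ T ∈ 𝒯, T ⊆ Metric.closedBall 0 α) :
    𝒯.Finite ∧ (Nat.card 𝒯 : ℝ) ≤ q * Real.pi * α ^ 2 / (2 * r ^ 3) := by
  have : Fact (finrank ℝ (EuclideanSpace ℝ (Fin 2)) = 2) := ⟨finrank_euclideanSpace_fin⟩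
  have hvol : ∀ T : 𝒯, ENNReal.ofReal (2 * r ^ 3 / q) ≤ volume (interior T.1) := by
    rintro ⟨T, hT⟩
    obtain ⟨p, hp, hpX, rfl, hR⟩ := htri T hT
    rw [measure_interior_of_null_frontier ((convex_convexHull ℝ _).addHaar_frontier volume)]
    exact Affine.Triangle.ofReal_le_volume_convexHull_of_le_dist hr.le ⟨p, hp⟩
      (fun i j hij => hsep _ (hpX i) _ (hpX j) (hp.injective.ne hij)) hR
  have hunion : volume (⋃ T : 𝒯, interior T.1) ≤ ENNReal.ofReal (Real.pi * α ^ 2) := by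
    refine (measure_mono (iUnion_subset fun T : 𝒯 =>
      interior_subset.trans (hsub T T.2))).trans_eq ?_
    rw [EuclideanSpace.volume_closedBall_fin_two, ← ENNReal.ofReal_pow hα.le,
      ← ENNReal.ofReal_mul (by positivity), mul_comm]
  obtain ⟨hfin, hcard⟩ := finite_and_natCard_mul_le_of_enatCard_mul_le (by positivity)
    (by positivity) ((enatCard_mul_le_measure_iUnion volume
      (fun T => measurableSet_interior.nullMeasurableSet)
      (fun S T hST => hdisj S.2 T.2 (Subtype.coe_ne_coe.2 hST)) hvol).trans hunion)
  refine ⟨Set.finite_coe_iff.1 hfin, ?_⟩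
  rw [le_div_iff₀ (by positivity)]
  rw [mul_div_assoc', div_le_iff₀ hq] at hcard
  linarith
end

section
/- Let q > 0 and α > 2q. Let 𝒯 be a family of triangles in ℝ² (convex hulls of affinely independent triples), each with circumradius at most q, each of area at least c > 0, with pairwise disjoint interiors, and each meeting the circle {x ∈ ℝ² : ‖x‖ = α}. Then 𝒯 has cardinality at most 8πqα/c. -/
open MeasureTheory Metric ENNReal


/-- Let `q > 0` and `α > 2 * q`. A family of triangles in the plane,
each with circumradius at most `q`, each of area at least `c > 0`, with pairwise
disjoint interiors, and each meeting the circle of radius `α` about the origin,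
has cardinality at most `8 * π * q * α / c`. -/
theorem card_triangles_meeting_sphere_le
    (q α c : ℝ) (hq : 0 < q) (hα : 2 * q < α) (hc : 0 < c)
    (𝒯 : Set (Set (EuclideanSpace ℝ (Fin 2))))
    (htri : ∀ T ∈ 𝒯, ∃ p : Fin 3 → EuclideanSpace ℝ (Fin 2),
      ∃ hp : AffineIndependent ℝ p, T = convexHull ℝ (Set.range p) ∧
        Affine.Simplex.circumradius (⟨p, hp⟩ : Affine.Simplex ℝ (EuclideanSpace ℝ (Fin 2)) 2) ≤ q)
    (harea : ∀ T ∈ 𝒯, ENNReal.ofReal c ≤ MeasureTheory.volume T)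
    (hdisj : 𝒯.Pairwise fun S T => Disjoint (interior S) (interior T))
    (hmeet : ∀ T ∈ 𝒯, (T ∩ Metric.sphere 0 α).Nonempty) :
    𝒯.Finite ∧ (Nat.card 𝒯 : ℝ) ≤ 8 * Real.pi * q * α / c := by
  have hα0 : (0:ℝ) < α := by linarith
  set A : Set (EuclideanSpace ℝ (Fin 2)) :=
    closedBall 0 (α + 2 * q) \ ball 0 (α - 2 * q) with hA
  -- Step 1: each triangle is contained in the annulus A
  have hsubA : ∀ T ∈ 𝒯, T ⊆ A := by
    intro T hT
    obtain ⟨p, hp, hThull, hcr⟩ := htri T hT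
    set S : Affine.Simplex ℝ (EuclideanSpace ℝ (Fin 2)) 2 := ⟨p, hp⟩
    have hball : T ⊆ closedBall S.circumcenter q := by
      rw [hThull]
      refine convexHull_min ?_ (convex_closedBall _ _)
      rintro x ⟨i, rfl⟩
      have := S.dist_circumcenter_eq_circumradius i
      simp only [mem_closedBall]
      calc dist (p i) S.circumcenter = S.circumradius := this
        _ ≤ q := hcr
    obtain ⟨y, hyT, hy⟩ := hmeet T hT
    have hyn : dist y (0 : EuclideanSpace ℝ (Fin 2)) = α := by
      simpa using hy
    intro x hx
    have hxy : dist x y ≤ 2 * q := by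
      calc dist x y ≤ dist x S.circumcenter + dist S.circumcenter y := dist_triangle _ _ _
        _ ≤ q + q := by
            have h1 := hball hx
            have h2 := hball hyT
            rw [mem_closedBall] at h1 h2
            rw [dist_comm S.circumcenter y]
            exact add_le_add h1 h2
        _ = 2 * q := by ring
    constructor
    · rw [mem_closedBall]
      calc dist x 0 ≤ dist x y + dist y 0 := dist_triangle _ _ _
        _ ≤ 2 * q + α := add_le_add hxy hyn.le
        _ = α + 2 * q := by ring
    · simp only [mem_ball, not_lt]
      have : α ≤ dist y x + dist x 0 := by
        rw [← hyn]; exact dist_triangle _ _ _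
      rw [dist_comm y x] at this
      linarith
  -- Step 2: the volume of the annulus
  have h2q : (0:ℝ) ≤ α - 2 * q := by linarith
  have hvol2 : ∀ r : ℝ, 0 ≤ r → volume (ball (0 : EuclideanSpace ℝ (Fin 2)) r)
      = ENNReal.ofReal (r ^ 2 * Real.pi) := by
    intro r hr
    rw [EuclideanSpace.volume_ball]
    have : (Fintype.card (Fin 2)) = 2 := by simp
    rw [this]
    rw [show ((2:ℕ):ℝ)/2 + 1 = 2 by norm_num, Real.Gamma_two,
      Real.sq_sqrt Real.pi_pos.le]
    rw [← ENNReal.ofReal_pow hr, ← ENNReal.ofReal_mul (by positivity)]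
    norm_num
  have hvolA : volume A ≤ ENNReal.ofReal (8 * Real.pi * q * α) := by
    have hsub : ball (0 : EuclideanSpace ℝ (Fin 2)) (α - 2 * q)
        ⊆ closedBall 0 (α + 2 * q) := by
      apply ball_subset_closedBall.trans
      exact closedBall_subset_closedBall (by linarith)
    have hfin : volume (ball (0 : EuclideanSpace ℝ (Fin 2)) (α - 2 * q)) ≠ ⊤ :=
      measure_ball_lt_top.ne
    rw [hA, measure_diff hsub measurableSet_ball.nullMeasurableSet hfin]
    have hcb : volume (closedBall (0 : EuclideanSpace ℝ (Fin 2)) (α + 2 * q))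
        = ENNReal.ofReal ((α + 2 * q) ^ 2 * Real.pi) := by
      rw [EuclideanSpace.volume_closedBall]
      have h2 : (Fintype.card (Fin 2)) = 2 := by simp
      rw [h2, show ((2:ℕ):ℝ)/2 + 1 = 2 by norm_num, Real.Gamma_two,
        Real.sq_sqrt Real.pi_pos.le,
        ← ENNReal.ofReal_pow (by linarith : (0:ℝ) ≤ α + 2*q),
        ← ENNReal.ofReal_mul (by positivity)]
      norm_num
    rw [hcb, hvol2 _ h2q, ← ENNReal.ofReal_sub _ (by positivity)]
    apply ENNReal.ofReal_le_ofReal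
    nlinarith [Real.pi_pos]
  -- Step 3: interiors have volume at least c
  have hint : ∀ T ∈ 𝒯, ENNReal.ofReal c ≤ volume (interior T) := by
    intro T hT
    obtain ⟨p, hp, hThull, -⟩ := htri T hT
    have hconv : Convex ℝ T := hThull ▸ convex_convexHull ℝ _
    have hfr : volume (frontier T) = 0 := hconv.addHaar_frontier _
    calc ENNReal.ofReal c ≤ volume T := harea T hT
      _ ≤ volume (interior T ∪ frontier T) := by
          apply measure_mono
          intro x hx
          by_cases h : x ∈ interior T
          · exact Or.inl h
          · exact Or.inr ⟨subset_closure hx, h⟩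
      _ ≤ volume (interior T) + volume (frontier T) := measure_union_le _ _
      _ = volume (interior T) := by rw [hfr, add_zero]
  -- Step 4: any finset of triangles has bounded cardinality
  have key : ∀ s : Finset (Set (EuclideanSpace ℝ (Fin 2))), ↑s ⊆ 𝒯 →
      (s.card : ℝ) * c ≤ 8 * Real.pi * q * α := by
    intro s hs
    have hd : (↑s : Set (Set (EuclideanSpace ℝ (Fin 2)))).PairwiseDisjoint
        (fun T => interior T) := hdisj.mono hs
    have hm : ∀ T ∈ s, MeasurableSet (interior T) := fun T _ => isOpen_interior.measurableSet
    have hsum : (s.card : ℝ≥0∞) * ENNReal.ofReal c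
        ≤ volume (⋃ T ∈ s, interior T) := by
      rw [measure_biUnion_finset hd hm]
      calc (s.card : ℝ≥0∞) * ENNReal.ofReal c = ∑ _T ∈ s, ENNReal.ofReal c := by
            rw [Finset.sum_const, nsmul_eq_mul]
        _ ≤ ∑ T ∈ s, volume (interior T) :=
            Finset.sum_le_sum (fun T hT => hint T (hs hT))
    have hUA : (⋃ T ∈ s, interior T) ⊆ A := by
      intro x hx
      simp only [Set.mem_iUnion] at hx
      obtain ⟨T, hT, hxT⟩ := hx
      exact hsubA T (hs hT) (interior_subset hxT)
    have hE : ENNReal.ofReal ((s.card : ℝ) * c) ≤ ENNReal.ofReal (8 * Real.pi * q * α) := by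
      rw [ENNReal.ofReal_mul (by positivity), ENNReal.ofReal_natCast]
      exact hsum.trans ((measure_mono hUA).trans hvolA)
    have := (ENNReal.ofReal_le_ofReal_iff (by positivity)).mp hE
    exact this
  have hcard : ∀ s : Finset (Set (EuclideanSpace ℝ (Fin 2))), ↑s ⊆ 𝒯 →
      (s.card : ℝ) ≤ 8 * Real.pi * q * α / c := by
    intro s hs
    rw [le_div_iff₀ hc]
    exact key s hs
  have hfin : 𝒯.Finite := by
    by_contra hinf
    obtain ⟨t, ht, htcard⟩ := Set.Infinite.exists_subset_card_eq hinf (⌈8 * Real.pi * q * α / c⌉₊ + 1)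
    have := hcard t ht
    rw [htcard] at this
    have h1 : (8 * Real.pi * q * α / c) ≤ (⌈8 * Real.pi * q * α / c⌉₊ : ℝ) :=
      Nat.le_ceil _
    push_cast at this
    linarith
  refine ⟨hfin, ?_⟩
  have : Nat.card 𝒯 = hfin.toFinset.card := by
    rw [Nat.card_eq_card_finite_toFinset]
  rw [this]
  exact hcard _ (by simp)
end
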